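/- On the third branch [σ² + c, ∞), with 0 < λ < λ̃, c > 0, the derivative P_e'(τ) = [e^{-(τ-σ²)/λ̃}(e^{c/λ̃} - 1) + e^{-(τ-σ²)/λ}(1 - e^{c/λ})]/c changes sign from negative to positive at τ* = (λ̃λ/(λ̃-λ))ln Δ + σ²; i.e., P_e'(τ) < 0 for σ² + c ≤ τ < τ* and P_e'(τ) > 0 for τ > τ*. Hence τ* is the global minimizer of P_e on [σ² + c, ∞). -/

import Mathlib

/-!
Factoring out `exp (-(τ - σ²)/λ)`, the sign of `P_e'(τ)` is that of
`A e^{(1/λ - 1/λ̃)(τ - σ²)} - B` with `A = e^{c/λ̃} - 1`, `B = e^{c/λ} - 1` both positive;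
since `1/λ - 1/λ̃ > 0` this is increasing in `τ` and vanishes exactly at `τ*`.
A differentiable function whose derivative is nonpositive before a point and nonnegative
after it attains its minimum there.
-/

open Real Set

theorem isMinOn_Ici_of_hasDerivAt {f f' : ℝ → ℝ} {a m : ℝ} (hf : ∀ x, HasDerivAt f (f' x) x)
    (hneg : ∀ x, a ≤ x → x < m → f' x ≤ 0) (hpos : ∀ x, m < x → 0 ≤ f' x) :
    IsMinOn f (Ici a) m := by
  have hcont : ContinuousOn f univ := fun x _ => (hf x).continuousAt.continuousWithinAt
  intro x (hx : a ≤ x)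
  rcases le_total x m with hxm | hmx
  · refine antitoneOn_of_hasDerivWithinAt_nonpos (convex_Icc x m) (hcont.mono (subset_univ _))
      (fun y _ => (hf y).hasDerivWithinAt) (fun y hy => ?_) ⟨le_rfl, hxm⟩ ⟨hxm, le_rfl⟩ hxm
    rw [interior_Icc] at hy
    exact hneg y (hx.trans hy.1.le) hy.2
  · refine monotoneOn_of_hasDerivWithinAt_nonneg (convex_Ici m) (hcont.mono (subset_univ _))
      (fun y _ => (hf y).hasDerivWithinAt) (fun y hy => ?_) self_mem_Ici hmx hmx
    rw [interior_Ici] at hy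
    exact hpos y hy

theorem hasDerivAt_mul_exp_neg_sub_div (l s x : ℝ) (hl : l ≠ 0) :
    HasDerivAt (fun t => l * exp (-(t - s) / l)) (-exp (-(x - s) / l)) x :=
  (((((hasDerivAt_id' x).sub_const s).fun_neg).div_const l).exp.const_mul l).congr_deriv
    (by field_simp)

theorem mul_exp_neg_mul_eq_mul_exp_mul_sub (a b A x : ℝ) :
    A * exp (-(a * x)) = A * exp ((b - a) * x) * exp (-(b * x)) := by
  rw [mul_assoc, ← exp_add]; ring_nf

theorem mul_exp_neg_mul_lt_mul_exp_neg_mul_iff {a b A B x : ℝ} (hab : a < b) (hA : 0 < A)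
    (hB : 0 < B) :
    A * exp (-(a * x)) < B * exp (-(b * x)) ↔ x < log (B / A) / (b - a) := by
  rw [mul_exp_neg_mul_eq_mul_exp_mul_sub a b, mul_lt_mul_iff_left₀ (exp_pos _), ← lt_div_iff₀' hA,
    ← lt_log_iff_exp_lt (by positivity), lt_div_iff₀ (sub_pos.2 hab), mul_comm]

theorem mul_exp_neg_mul_lt_mul_exp_neg_mul_iff' {a b A B x : ℝ} (hab : a < b) (hA : 0 < A)
    (hB : 0 < B) :
    B * exp (-(b * x)) < A * exp (-(a * x)) ↔ log (B / A) / (b - a) < x := by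
  rw [mul_exp_neg_mul_eq_mul_exp_mul_sub a b, mul_lt_mul_iff_left₀ (exp_pos _), ← div_lt_iff₀' hA,
    ← log_lt_iff_lt_exp (by positivity), div_lt_iff₀ (sub_pos.2 hab), mul_comm]

theorem stmt17_general (lam lamt c σ2 : ℝ) (h0 : 0 < lam) (hll : lam < lamt) (hc : 0 < c) :
    let Pe : ℝ → ℝ := fun τ =>
      1 + (lamt * Real.exp (-(τ - σ2) / lamt) * (1 - Real.exp (c / lamt)) +
           lam * Real.exp (-(τ - σ2) / lam) * (Real.exp (c / lam) - 1)) / c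
    let Pe' : ℝ → ℝ := fun τ =>
      (Real.exp (-(τ - σ2) / lamt) * (Real.exp (c / lamt) - 1) +
       Real.exp (-(τ - σ2) / lam) * (1 - Real.exp (c / lam))) / c
    let Δ : ℝ := (Real.exp (c / lam) - 1) / (Real.exp (c / lamt) - 1)
    let τs : ℝ := lamt * lam / (lamt - lam) * Real.log Δ + σ2
    (∀ τ, σ2 + c ≤ τ → τ < τs → Pe' τ < 0) ∧
    (∀ τ, τs < τ → 0 < Pe' τ) ∧
    (∀ τ, σ2 + c ≤ τ → Pe τs ≤ Pe τ) := by
  intro Pe Pe' Δ τs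
  have hlt : 0 < lamt := h0.trans hll
  have hA : 0 < exp (c / lamt) - 1 := by simp only [sub_pos, one_lt_exp_iff]; positivity
  have hB : 0 < exp (c / lam) - 1 := by simp only [sub_pos, one_lt_exp_iff]; positivity
  have hrate : lamt⁻¹ < lam⁻¹ := inv_strictAnti₀ h0 hll
  have hPe' : ∀ τ, Pe' τ = ((exp (c / lamt) - 1) * exp (-(lamt⁻¹ * (τ - σ2))) -
      (exp (c / lam) - 1) * exp (-(lam⁻¹ * (τ - σ2)))) / c := fun τ => by
    simp only [Pe']; ring_nf
  have hτs : τs = log Δ / (lam⁻¹ - lamt⁻¹) + σ2 := by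
    simp only [τs]; field_simp
  have hneg : ∀ τ, τ < τs → Pe' τ < 0 := fun τ hτ => by
    rw [hPe', div_lt_iff₀ hc, zero_mul, sub_neg, mul_exp_neg_mul_lt_mul_exp_neg_mul_iff hrate hA hB]
    linarith
  have hpos : ∀ τ, τs < τ → 0 < Pe' τ := fun τ hτ => by
    rw [hPe', div_pos_iff_of_pos_right hc, sub_pos,
      mul_exp_neg_mul_lt_mul_exp_neg_mul_iff' hrate hA hB]
    linarith
  have hderiv : ∀ τ, HasDerivAt Pe (Pe' τ) τ := fun τ =>
    ((((hasDerivAt_mul_exp_neg_sub_div lamt σ2 τ hlt.ne').mul_const _).add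
      ((hasDerivAt_mul_exp_neg_sub_div lam σ2 τ h0.ne').mul_const _)).div_const c).const_add 1
      |>.congr_deriv (by simp only [Pe']; ring)
  exact ⟨fun τ _ hτ => hneg τ hτ, hpos, isMinOn_Ici_of_hasDerivAt hderiv
    (fun τ _ hτ => (hneg τ hτ).le) (fun τ hτ => (hpos τ hτ).le)⟩

/-- On the third branch, the derivative of the DEP changes sign from negative to
positive at `τ*`, hence `τ*` is the global minimizer on `[σ² + c, ∞)`. -/
theorem stmt17 (lam lamt c σ2 : ℝ) (h0 : 0 < lam) (hll : lam < lamt) (hc : 0 < c)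
    (hσ : 0 ≤ σ2) :
    let Pe : ℝ → ℝ := fun τ =>
      1 + (lamt * Real.exp (-(τ - σ2) / lamt) * (1 - Real.exp (c / lamt)) +
           lam * Real.exp (-(τ - σ2) / lam) * (Real.exp (c / lam) - 1)) / c
    let Pe' : ℝ → ℝ := fun τ =>
      (Real.exp (-(τ - σ2) / lamt) * (Real.exp (c / lamt) - 1) +
       Real.exp (-(τ - σ2) / lam) * (1 - Real.exp (c / lam))) / c
    let Δ : ℝ := (Real.exp (c / lam) - 1) / (Real.exp (c / lamt) - 1)
    let τs : ℝ := lamt * lam / (lamt - lam) * Real.log Δ + σ2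
    (∀ τ, σ2 + c ≤ τ → τ < τs → Pe' τ < 0) ∧
    (∀ τ, τs < τ → 0 < Pe' τ) ∧
    (∀ τ, σ2 + c ≤ τ → Pe τs ≤ Pe τ) :=
  stmt17_general lam lamt c σ2 h0 hll hc
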